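/- arXiv:1010.2964 — 5 statements merged into one kernel-verified Lean document; each statement's English description precedes it below -/
import Mathlib

section
/- Let V be an n-dimensional vector space over a field K. Let A and B be extensors in the exterior algebra Λ(V), with corresponding subspaces Ā and B̄, and let p = dim(Ā) - dim(Ā ∩ B̄). If h > p, then the raising geometric product ⋄₂₁^(h)(A ⊗ B) = Σ_{(A)} A₍₁₎ ⊗ A₍₂₎B (summing over coproduct slices of A of degrees (a-h, h)) equals zero. -/
open TensorProduct

/-- The ordered wedge product of the vectors `u t`, `t ∈ S` (in increasing order of index). -/
noncomputable def wedgeOn (K : Type*) {V : Type*} [CommRing K] [AddCommGroup V] [Module K V]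
    {a : ℕ} (u : Fin a → V) (S : Finset (Fin a)) : ExteriorAlgebra K V :=
  ((S.sort (· ≤ ·)).map fun t => ExteriorAlgebra.ι K (u t)).prod

/-- The shuffle sign of the coproduct slice `(Sᶜ, S)` of a word of length `a`. -/
def shuffleSign {a : ℕ} (S : Finset (Fin a)) : ℤ :=
  (-1) ^ (∑ i ∈ S, (Sᶜ.filter fun j => i < j).card)

/-- The raising geometric product `⋄₂₁^(h)(A ⊗ B) = Σ_{(A)₍ₐ₋ₕ,ₕ₎} A₍₁₎ ⊗ A₍₂₎B` for an
extensor `A = u 0 ∧ ⋯ ∧ u (a-1)` and `B ∈ Λ(V)`. -/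
noncomputable def geom21 (K : Type*) {V : Type*} [CommRing K] [AddCommGroup V] [Module K V]
    (h : ℕ) {a : ℕ} (u : Fin a → V) (B : ExteriorAlgebra K V) :
    ExteriorAlgebra K V ⊗[K] ExteriorAlgebra K V :=
  ∑ S ∈ Finset.powersetCard h Finset.univ,
    shuffleSign S • (wedgeOn K u Sᶜ ⊗ₜ[K] (wedgeOn K u S * B))

/-! Each summand contains the factor `A₍₂₎ ∧ B`, a wedge of the `h` vectors of the slice `A₍₂₎` and
the `b` vectors of `B`. All of them lie in `Ā ⊔ B̄`, whose dimension is
`dim Ā + dim B̄ - dim (Ā ⊓ B̄) = p + dim B̄ ≤ p + b < h + b`, so they are linearly dependent and the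
wedge vanishes. -/

open ExteriorAlgebra Module

section

variable {K V : Type*} [Field K] [AddCommGroup V] [Module K V]

theorem ExteriorAlgebra.list_prod_map_ι_eq_zero_of_finrank_lt (W : Submodule K V)
    [FiniteDimensional K W] (L : List V) (hLW : ∀ x ∈ L, x ∈ W) (hW : finrank K W < L.length) :
    (L.map (ι K)).prod = 0 := by
  have hprod : (L.map (ι K)).prod = ιMulti K L.length L.get := by
    rw [ιMulti_apply, show (fun i => ι K (L.get i)) = ι K ∘ L.get from rfl, ← List.map_ofFn,
      List.ofFn_get]
  have hdep : ¬LinearIndependent K L.get := by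
    rw [linearIndependent_iff_card_le_finrank_span, Fintype.card_fin, not_le]
    refine lt_of_le_of_lt (Submodule.finrank_mono ?_) hW
    rw [Submodule.span_le]
    rintro _ ⟨i, rfl⟩
    exact hLW _ (List.get_mem L i)
  rw [hprod, AlternatingMap.map_linearDependent _ _ hdep]

theorem Submodule.finrank_sup_eq_sub_add (A B : Submodule K V) [FiniteDimensional K A]
    [FiniteDimensional K B] :
    finrank K ↥(A ⊔ B) = (finrank K A - finrank K ↥(A ⊓ B)) + finrank K B := by
  have hinf : finrank K ↥(A ⊓ B) ≤ finrank K A := Submodule.finrank_mono inf_le_left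
  have := Submodule.finrank_sup_add_finrank_inf_eq A B
  omega

theorem wedgeOn_mul_ιMulti {a b : ℕ} (u : Fin a → V) (S : Finset (Fin a)) (w : Fin b → V) :
    wedgeOn K u S * ιMulti K b w = (((S.sort (· ≤ ·)).map u ++ List.ofFn w).map (ι K)).prod := by
  rw [List.map_append, List.prod_append, ιMulti_apply, List.map_ofFn, List.map_map]
  rfl

end

theorem stmt0_general {K V : Type*} [Field K] [AddCommGroup V] [Module K V]
    {a b : ℕ} (u : Fin a → V) (w : Fin b → V)
    (p : ℕ)
    (hp : p = Module.finrank K (Submodule.span K (Set.range u)) -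
      Module.finrank K ((Submodule.span K (Set.range u)) ⊓ (Submodule.span K (Set.range w)) : Submodule K V))
    (h : ℕ) (hh : p < h) :
    geom21 K h u (ExteriorAlgebra.ιMulti K b w) = 0 := by
  set A := Submodule.span K (Set.range u)
  set B := Submodule.span K (Set.range w)
  have : FiniteDimensional K A := .span_of_finite K (Set.finite_range u)
  have : FiniteDimensional K B := .span_of_finite K (Set.finite_range w)
  have hdim : finrank K ↥(A ⊔ B) < h + b := by
    have hB : finrank K B ≤ b := (finrank_range_le_card w).trans_eq (Fintype.card_fin b)
    rw [Submodule.finrank_sup_eq_sub_add, ← hp]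
    omega
  refine Finset.sum_eq_zero fun S hS => ?_
  rw [wedgeOn_mul_ιMulti, list_prod_map_ι_eq_zero_of_finrank_lt (A ⊔ B), tmul_zero, smul_zero]
  · simp only [List.mem_append, List.mem_map, List.mem_ofFn]
    rintro _ (⟨i, -, rfl⟩ | ⟨j, rfl⟩)
    · exact Submodule.mem_sup_left (Submodule.subset_span ⟨i, rfl⟩)
    · exact Submodule.mem_sup_right (Submodule.subset_span ⟨j, rfl⟩)
  · rwa [List.length_append, List.length_map, Finset.length_sort, List.length_ofFn,
      (Finset.mem_powersetCard.mp hS).2]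

/-- if `h > p = dim Ā - dim (Ā ⊓ B̄)` then `⋄₂₁^(h)(A ⊗ B) = 0`. -/
theorem stmt0 {K V : Type*} [Field K] [AddCommGroup V] [Module K V] [FiniteDimensional K V]
    {a b : ℕ} (u : Fin a → V) (w : Fin b → V)
    (hu : LinearIndependent K u) (hw : LinearIndependent K w)
    (p : ℕ)
    (hp : p = Module.finrank K (Submodule.span K (Set.range u)) -
      Module.finrank K ((Submodule.span K (Set.range u)) ⊓ (Submodule.span K (Set.range w)) : Submodule K V))
    (h : ℕ) (hh : p < h) :
    geom21 K h u (ExteriorAlgebra.ιMulti K b w) = 0 :=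
  stmt0_general u w p hp h hh
end

section
/- Let A and B be extensors in Λ(V). Then Ā ⊆ B̄ if and only if ⋄₂₁^(1)(A ⊗ B) = 0, i.e. Σ_{(A)₍ₐ₋₁,₁₎} A₍₁₎ ⊗ A₍₂₎∧B = 0. -/
/-!
Up to sign, the `i`-th term of `⋄₂₁^(1)(A ⊗ B)` is `(u₀ ∧ ⋯ ûᵢ ⋯ ∧ u_{a-1}) ⊗ (uᵢ ∧ B)`. The left
factors are distinct `(a-1)`-fold wedges of the independent family `u`, hence linearly independent
in `Λ(V)`, so the sum vanishes iff every `uᵢ ∧ B` does. Since `w` is independent, `uᵢ ∧ B = 0` iff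
`uᵢ, w₀, …, w_{b-1}` are dependent, i.e. iff `uᵢ ∈ B̄`.
-/

open TensorProduct

section CommRing
variable {K V : Type*} [CommRing K] [AddCommGroup V] [Module K V] {a : ℕ}

theorem wedgeOn_singleton (u : Fin a → V) (i : Fin a) :
    wedgeOn K u {i} = ExteriorAlgebra.ι K (u i) := by
  simp [wedgeOn]

theorem wedgeOn_eq_ιMulti_family (u : Fin a → V) {S : Finset (Fin a)} {n : ℕ} (hS : S.card = n) :
    wedgeOn K u S = ExteriorAlgebra.ιMulti_family K n u ⟨S, hS⟩ := by
  rw [ExteriorAlgebra.ιMulti_family, ExteriorAlgebra.ιMulti_apply, wedgeOn]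
  subst hS
  congr 1
  refine List.ext_getElem (by simp) fun i _ _ => ?_
  simp only [List.getElem_map, List.getElem_ofFn, Function.comp_apply,
    Set.powersetCard.ofFinEmbEquiv_symm_apply]
  rfl

theorem isUnit_shuffleSign (S : Finset (Fin a)) : IsUnit (shuffleSign S) :=
  isUnit_neg_one.pow _

theorem geom21_one_eq_sum (u : Fin a → V) (B : ExteriorAlgebra K V) :
    geom21 K 1 u B =
      ∑ i, wedgeOn K u {i}ᶜ ⊗ₜ[K] (shuffleSign {i} • (ExteriorAlgebra.ι K (u i) * B)) := by
  simp only [geom21, Finset.powersetCard_one, Finset.sum_map, Function.Embedding.coeFn_mk,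
    wedgeOn_singleton, tmul_smul]

end CommRing

section Field
variable {K V : Type*} [Field K] [AddCommGroup V] [Module K V]

theorem LinearIndependent.eq_zero_of_sum_tmul_eq_zero {ι M N : Type*} [Fintype ι]
    [AddCommGroup M] [Module K M] [AddCommGroup N] [Module K N] {x : ι → M}
    (hx : LinearIndependent K x) {y : ι → N} (h : ∑ i, x i ⊗ₜ[K] y i = 0) (i : ι) : y i = 0 := by
  classical
  obtain ⟨g, hg⟩ := (Finsupp.linearCombination K x).exists_leftInverse_of_injective
    (LinearMap.ker_eq_bot.2 hx)
  have hgx : ∀ j, g (x j) = Finsupp.single j 1 := fun j => by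
    simpa using LinearMap.congr_fun hg (Finsupp.single j 1)
  have := congrArg (fun t => finsuppScalarLeft K N ι (g.rTensor N t) i) h
  simpa [hgx, finsuppScalarLeft_apply_tmul, Finsupp.single_apply] using this

theorem ExteriorAlgebra.ιMulti_ne_zero_of_linearIndependent {n : ℕ} {v : Fin n → V}
    (hv : LinearIndependent K v) : ExteriorAlgebra.ιMulti K n v ≠ 0 := by
  have h := (exteriorPower.ιMulti_family_linearIndependent_field (n := n) hv).ne_zero
    ⟨Finset.univ, Finset.card_fin n⟩
  have hemb : Finset.univ.orderEmbOfFin (Finset.card_fin n) = RelEmbedding.refl (· ≤ ·) :=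
    (Finset.orderEmbOfFin_unique' _ fun _ => Finset.mem_univ _).symm
  rw [Ne, ← Submodule.coe_eq_zero, exteriorPower.ιMulti_family_apply_coe] at h
  simpa [ExteriorAlgebra.ιMulti_family, Set.powersetCard.ofFinEmbEquiv_symm_apply, hemb] using h

theorem ExteriorAlgebra.ι_mul_ιMulti_eq_zero_iff {b : ℕ} {w : Fin b → V}
    (hw : LinearIndependent K w) (x : V) :
    ExteriorAlgebra.ι K x * ExteriorAlgebra.ιMulti K b w = 0 ↔
      x ∈ Submodule.span K (Set.range w) := by
  have hcons : ExteriorAlgebra.ι K x * ExteriorAlgebra.ιMulti K b w =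
      ExteriorAlgebra.ιMulti K (b + 1) (Fin.cons x w) := by
    rw [ExteriorAlgebra.ιMulti_succ_apply, Fin.cons_zero]
    rfl
  rw [hcons]
  constructor
  · intro h
    by_contra hx
    exact ExteriorAlgebra.ιMulti_ne_zero_of_linearIndependent
      (linearIndependent_finCons.2 ⟨hw, hx⟩) h
  · intro hx
    exact AlternatingMap.map_linearDependent _ _
      fun hlin => (linearIndependent_finCons.1 hlin).2 hx

variable {a : ℕ} {u : Fin a → V}

theorem linearIndependent_wedgeOn (hu : LinearIndependent K u) (n : ℕ) :
    LinearIndependent K fun S : Set.powersetCard (Fin a) n => wedgeOn K u S := by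
  have hfam : (fun S : Set.powersetCard (Fin a) n => wedgeOn K u S) =
      (⋀[K]^n V).subtype ∘ exteriorPower.ιMulti_family K n u :=
    funext fun S => wedgeOn_eq_ιMulti_family u S.2
  rw [hfam]
  exact (exteriorPower.ιMulti_family_linearIndependent_field (n := n) hu).map' _
    (Submodule.ker_subtype _)

theorem linearIndependent_wedgeOn_compl_singleton (hu : LinearIndependent K u) :
    LinearIndependent K fun i => wedgeOn K u {i}ᶜ :=
  (linearIndependent_wedgeOn hu (a - 1)).comp
    (fun i => ⟨{i}ᶜ, by
      show Finset.card _ = _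
      rw [Finset.card_compl, Finset.card_singleton, Fintype.card_fin]⟩)
    fun i j h => by simpa using congrArg Subtype.val h

end Field

theorem stmt2_general {K V : Type*} [Field K] [AddCommGroup V] [Module K V]
    {a b : ℕ} (u : Fin a → V) (w : Fin b → V)
    (hu : LinearIndependent K u) (hw : LinearIndependent K w) :
    Submodule.span K (Set.range u) ≤ Submodule.span K (Set.range w) ↔
      geom21 K 1 u (ExteriorAlgebra.ιMulti K b w) = 0 := by
  have hterm : ∀ i, shuffleSign {i} • (ExteriorAlgebra.ι K (u i) * ExteriorAlgebra.ιMulti K b w)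
      = 0 ↔ u i ∈ Submodule.span K (Set.range w) := fun i =>
    (isUnit_shuffleSign _).smul_eq_zero.trans
      (ExteriorAlgebra.ι_mul_ιMulti_eq_zero_iff hw (u i))
  rw [Submodule.span_le, Set.range_subset_iff, geom21_one_eq_sum]
  constructor
  · intro h
    refine Finset.sum_eq_zero fun i _ => ?_
    rw [(hterm i).2 (h i), tmul_zero]
  · intro h i
    exact (hterm i).1
      ((linearIndependent_wedgeOn_compl_singleton hu).eq_zero_of_sum_tmul_eq_zero h i)

/-- `Ā ⊆ B̄` if and only if `⋄₂₁^(1)(A ⊗ B) = 0`. -/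
theorem stmt2 {K V : Type*} [Field K] [AddCommGroup V] [Module K V] [FiniteDimensional K V]
    {a b : ℕ} (u : Fin a → V) (w : Fin b → V)
    (hu : LinearIndependent K u) (hw : LinearIndependent K w) :
    Submodule.span K (Set.range u) ≤ Submodule.span K (Set.range w) ↔
      geom21 K 1 u (ExteriorAlgebra.ιMulti K b w) = 0 :=
  stmt2_general u w hu hw
end

section
/- In Skew[L|m], for 1 ≤ i < j ≤ m and h ≤ qᵢ: D_{ji}^h (w|⋯ i^{(qᵢ)} ⋯ j^{(qⱼ)} ⋯) = ((qⱼ+h)!/qⱼ!) (w|⋯ i^{(qᵢ-h)} ⋯ j^{(qⱼ+h)} ⋯), and the result is 0 if h > qᵢ. -/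
/-!
On each monomial `(w₁|f 1)⋯(w_ℓ|f ℓ)` the polarization `D_{ji}` acts as a derivation, so it
replaces, one position at a time, a place `i` by `j`. Summing over the place assignments `f` of
content `q`, every assignment of the content `q'` obtained by moving one `i` to a `j` arises
from exactly `q'ⱼ = qⱼ + 1` pairs (assignment, position), whence
`D_{ji} (w|q) = (qⱼ + 1) (w|q')` as long as `qᵢ ≠ 0`, and `D_{ji} (w|q) = 0` once `qᵢ = 0`.
Iterating gives the ascending factorial `(qⱼ + 1)⋯(qⱼ + h) = (qⱼ + h)!/qⱼ!`.
-/

/-- The letterplace algebra `Skew[L|m]`: the free skew-symmetric `ℤ`-algebra on the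
letterplace variables `(x|i)`. -/
abbrev LetterplaceAlgebra (L : Type*) (m : ℕ) : Type _ :=
  ExteriorAlgebra ℤ ((L × Fin m) →₀ ℤ)

/-- The letterplace variable `(x|i)`. -/
noncomputable def lpVar {L : Type*} {m : ℕ} (x : L) (i : Fin m) : LetterplaceAlgebra L m :=
  ExteriorAlgebra.ι ℤ (Finsupp.single (x, i) 1)

/-- The biproduct `(w | 1^{(q 1)} ⋯ m^{(q m)})` of a word `w` of length `ℓ` in `Skew[L|m]`:
by the Laplace expansion, it equals the sum over all place assignments `f : Fin ℓ → Fin m`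
with `|f⁻¹(p)| = q p` of the products `(w₀|f 0)⋯(w_{ℓ-1}|f(ℓ-1))` (taken in the original
order of the word, which accounts for the shuffle signs of the coproduct slices).
It is zero when `ℓ ≠ q 1 + ⋯ + q m`. -/
noncomputable def biproduct {L : Type*} {m : ℕ} [DecidableEq L] {ℓ : ℕ}
    (w : Fin ℓ → L) (q : Fin m → ℕ) : LetterplaceAlgebra L m :=
  ∑ f ∈ Finset.univ.filter
      (fun f : Fin ℓ → Fin m => ∀ p, (Finset.univ.filter fun t => f t = p).card = q p),
    (List.ofFn fun t => lpVar (w t) (f t)).prod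

open Finset Function

theorem map_list_ofFn_prod_of_leibniz {A : Type*} [Ring A] (D : A → A)
    (hD : ∀ x y : A, D (x * y) = D x * y + x * D y) {n : ℕ} (g : Fin n → A) :
    D (List.ofFn g).prod = ∑ t, (List.ofFn (update g t (D (g t)))).prod := by
  induction n with
  | zero => simpa using hD 1 1
  | succ n ih =>
    rw [List.ofFn_succ, List.prod_cons, hD, ih, Fin.sum_univ_succ, mul_sum]
    congr 1
    · simp [List.ofFn_succ, Fin.succ_ne_zero]
    · refine sum_congr rfl fun t _ => ?_
      rw [List.ofFn_succ, List.prod_cons, update_of_ne (Fin.succ_ne_zero t).symm]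
      congr 3
      funext s
      simp [update_apply]

section Transfer

variable {β : Type*} [DecidableEq β]

def transferContent (q : β → ℕ) (i j : β) (h : ℕ) : β → ℕ :=
  update (update q i (q i - h)) j (q j + h)

variable (q : β → ℕ) {i j : β} (h : ℕ)

@[simp]
theorem transferContent_zero : transferContent q i j 0 = q := by
  simp [transferContent]

@[simp]
theorem transferContent_apply_right : transferContent q i j h j = q j + h :=
  update_self ..

theorem transferContent_apply_left (hij : i ≠ j) : transferContent q i j h i = q i - h := by
  rw [transferContent, update_of_ne hij, update_self]

theorem transferContent_apply_of_ne {p : β} (hpi : p ≠ i) (hpj : p ≠ j) :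
    transferContent q i j h p = q p := by
  rw [transferContent, update_of_ne hpj, update_of_ne hpi]

theorem transferContent_transferContent (hij : i ≠ j) (k : ℕ) :
    transferContent (transferContent q i j h) i j k = transferContent q i j (h + k) := by
  funext p
  by_cases hpj : p = j
  · subst hpj; simp [add_assoc]
  by_cases hpi : p = i
  · subst hpi; simp [transferContent_apply_left _ _ hij, Nat.sub_sub]
  · simp [transferContent_apply_of_ne _ _ hpi hpj]

theorem transferContent_transferContent_symm (hij : i ≠ j) (hh : h ≤ q i) :
    transferContent (transferContent q i j h) j i h = q := by
  funext p
  by_cases hpj : p = j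
  · subst hpj; simp [transferContent_apply_left _ _ hij.symm]
  by_cases hpi : p = i
  · subst hpi; simp [transferContent_apply_left _ _ hij]; omega
  · simp [transferContent_apply_of_ne _ _ hpi hpj, transferContent_apply_of_ne _ _ hpj hpi]

end Transfer

section PlaceContent

variable {α β : Type*} [Fintype α] [DecidableEq α] [DecidableEq β]

def placeContent (f : α → β) (p : β) : ℕ := #{t | f t = p}

theorem placeContent_update_add (f : α → β) (t : α) (b p : β) :
    placeContent (update f t b) p + (if f t = p then 1 else 0) =
      placeContent f p + (if b = p then 1 else 0) := by
  simp only [placeContent, card_filter]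
  have hupd : (fun s => if update f t b s = p then 1 else 0) =
      update (fun s => if f s = p then 1 else 0) t (if b = p then 1 else 0) := by
    funext s; exact apply_update (fun _ c => if c = p then 1 else 0) f t b s
  rw [hupd, sum_update_of_mem (mem_univ t), ← add_sum_erase _ _ (mem_univ t),
    sdiff_singleton_eq_erase]
  ring

theorem placeContent_update {f : α → β} {t : α} {b : β} (hb : f t ≠ b) :
    placeContent (update f t b) = transferContent (placeContent f) (f t) b 1 := by
  funext p
  have key := placeContent_update_add f t b p
  by_cases hpb : p = b
  · subst hpb
    rw [transferContent_apply_right]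
    simpa [hb] using key
  by_cases hpt : p = f t
  · subst hpt
    rw [transferContent_apply_left _ _ hb]
    simp only [if_true, hb.symm, if_false] at key
    omega
  · rw [transferContent_apply_of_ne _ _ hpt hpb]
    simpa [Ne.symm hpt, Ne.symm hpb] using key

end PlaceContent

section Polarization

variable {L : Type*} {m ℓ : ℕ}

structure IsPlacePolarization (i j : Fin m) (D : Module.End ℤ (LetterplaceAlgebra L m)) :
    Prop where
  leibniz : ∀ x y, D (x * y) = D x * y + x * D y
  map_lpVar : ∀ x k, D (lpVar x k) = if k = i then lpVar x j else 0

noncomputable def lpMonomial (w : Fin ℓ → L) (f : Fin ℓ → Fin m) : LetterplaceAlgebra L m :=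
  (List.ofFn fun t => lpVar (w t) (f t)).prod

variable {i j : Fin m} {D : Module.End ℤ (LetterplaceAlgebra L m)}

theorem IsPlacePolarization.map_lpMonomial (hD : IsPlacePolarization i j D) (w : Fin ℓ → L)
    (f : Fin ℓ → Fin m) :
    D (lpMonomial w f) = ∑ t with f t = i, lpMonomial w (update f t j) := by
  rw [lpMonomial, map_list_ofFn_prod_of_leibniz D hD.leibniz, sum_filter]
  refine sum_congr rfl fun t _ => ?_
  rw [hD.map_lpVar]
  split_ifs
  · rw [lpMonomial]
    congr 2
    funext s
    rw [apply_update (fun s k => lpVar (w s) k)]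
  · exact List.prod_eq_zero (List.mem_ofFn.mpr ⟨t, update_self ..⟩)

variable [DecidableEq L]

theorem biproduct_eq_sum_lpMonomial (w : Fin ℓ → L) (q : Fin m → ℕ) :
    biproduct w q = ∑ f with placeContent f = q, lpMonomial w f := by
  simp only [biproduct, lpMonomial, placeContent, funext_iff]

theorem IsPlacePolarization.map_biproduct_of_eq_zero (hD : IsPlacePolarization i j D)
    (w : Fin ℓ → L) {q : Fin m → ℕ} (hq : q i = 0) : D (biproduct w q) = 0 := by
  rw [biproduct_eq_sum_lpMonomial, map_sum]
  refine sum_eq_zero fun f hf => ?_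
  have : placeContent f i = 0 := by rw [(mem_filter.mp hf).2, hq]
  rw [hD.map_lpMonomial, card_eq_zero.mp this, sum_empty]

theorem IsPlacePolarization.map_biproduct (hD : IsPlacePolarization i j D) (hij : i ≠ j)
    (w : Fin ℓ → L) {q : Fin m → ℕ} (hq : q i ≠ 0) :
    D (biproduct w q) = (q j + 1) • biproduct w (transferContent q i j 1) := by
  simp only [biproduct_eq_sum_lpMonomial, map_sum, hD.map_lpMonomial, sum_sigma', smul_sum]
  have reindex : ∑ x ∈ Finset.sigma {f | placeContent f = q} (fun f => {t | f t = i}),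
        lpMonomial w (update x.1 x.2 j) =
      ∑ y ∈ Finset.sigma {g | placeContent g = transferContent q i j 1}
          (fun g => {t | g t = j}), lpMonomial w y.1 := by
    refine sum_nbij' (fun x => ⟨update x.1 x.2 j, x.2⟩) (fun y => ⟨update y.1 y.2 i, y.2⟩)
      ?_ ?_ ?_ ?_ fun _ _ => rfl
    · rintro ⟨f, t⟩ hx
      simp only [mem_sigma, mem_filter, mem_univ, true_and] at hx ⊢
      rw [placeContent_update (hx.2.trans_ne hij), hx.1, hx.2, update_self]
      exact ⟨rfl, rfl⟩
    · rintro ⟨g, t⟩ hy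
      simp only [mem_sigma, mem_filter, mem_univ, true_and] at hy ⊢
      rw [placeContent_update (hy.2.trans_ne hij.symm), hy.1, hy.2, update_self,
        transferContent_transferContent_symm _ _ hij (Nat.one_le_iff_ne_zero.mpr hq)]
      exact ⟨rfl, rfl⟩
    · rintro ⟨f, t⟩ hx
      simp only [mem_sigma, mem_filter, mem_univ, true_and] at hx
      simp [← hx.2]
    · rintro ⟨g, t⟩ hy
      simp only [mem_sigma, mem_filter, mem_univ, true_and] at hy
      simp [← hy.2]
  rw [reindex, sum_sigma]
  refine sum_congr rfl fun g hg => ?_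
  have hcard : #{t | g t = j} = q j + 1 := by
    rw [← placeContent, (mem_filter.mp hg).2, transferContent_apply_right]
  simp only [sum_const, hcard]

theorem IsPlacePolarization.pow_apply_biproduct (hD : IsPlacePolarization i j D) (hij : i ≠ j)
    (w : Fin ℓ → L) {q : Fin m → ℕ} {h : ℕ} (hh : h ≤ q i) :
    (D ^ h) (biproduct w q) =
      (q j + 1).ascFactorial h • biproduct w (transferContent q i j h) := by
  induction h with
  | zero => simp
  | succ h ih =>
    have hpos : transferContent q i j h i ≠ 0 := by
      rw [transferContent_apply_left _ _ hij]; omega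
    rw [pow_succ', Module.End.mul_apply, ih (by omega), map_nsmul, hD.map_biproduct hij w hpos,
      transferContent_transferContent _ _ hij, smul_smul, transferContent_apply_right,
      Nat.ascFactorial_succ, add_right_comm, mul_comm]

end Polarization

/-- for `i < j` and the place polarization `D_{ji}`,
`D_{ji}^h (w|⋯i^{(qᵢ)}⋯j^{(qⱼ)}⋯) = ((qⱼ+h)!/qⱼ!) (w|⋯i^{(qᵢ-h)}⋯j^{(qⱼ+h)}⋯)` when
`h ≤ qᵢ`, and `= 0` when `h > qᵢ`. -/
theorem stmt14 {L : Type*} [DecidableEq L] {m : ℕ} (i j : Fin m) (hij : i < j)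
    (D : Module.End ℤ (LetterplaceAlgebra L m))
    (hLeibniz : ∀ x y : LetterplaceAlgebra L m, D (x * y) = D x * y + x * D y)
    (hgen : ∀ (x : L) (k : Fin m), D (lpVar x k) = if k = i then lpVar x j else 0)
    {ℓ : ℕ} (w : Fin ℓ → L) (q : Fin m → ℕ) (h : ℕ) :
    (h ≤ q i →
      (D ^ h) (biproduct w q) =
        ((q j + h).factorial / (q j).factorial) •
          biproduct w (Function.update (Function.update q i (q i - h)) j (q j + h))) ∧
    (q i < h → (D ^ h) (biproduct w q) = 0) := by
  have hD : IsPlacePolarization i j D := ⟨hLeibniz, hgen⟩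
  refine ⟨fun hh => ?_, fun hh => ?_⟩
  · rw [hD.pow_apply_biproduct hij.ne w hh, Nat.ascFactorial_eq_div]
    rfl
  · obtain ⟨k, rfl⟩ := Nat.exists_eq_add_of_lt hh
    have hkilled : transferContent q i j (q i) i = 0 := by
      rw [transferContent_apply_left _ _ hij.ne, Nat.sub_self]
    rw [show q i + k + 1 = k + 1 + q i by omega, pow_add, pow_succ, Module.End.mul_apply,
      Module.End.mul_apply, hD.pow_apply_biproduct hij.ne w le_rfl, map_nsmul,
      hD.map_biproduct_of_eq_zero w hkilled, smul_zero, map_zero]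
end

section
/- (Modular law for geometric products) Let A, B, C be extensors in Λ(V) with A dividing C (i.e. Ā ⊆ C̄). Then for all nonnegative integers s, t: ⋄₃₂^{(t)} ⋄₂₁^{(s)} (A ⊗ B ⊗ C) = ⋄₂₁^{(s)} ⋄₃₂^{(t)} (A ⊗ B ⊗ C). -/
open TensorProduct

/-!
Expand both sides over coproduct slices: the left side is a sum over pairs `(S, T')`, where
`S` slices `A` and `T'` slices `A₍₂₎ ∧ B`. If `T'` takes a factor of `A₍₂₎` to the third slot,
that factor is a vector of `Ā ⊆ C̄`, so its wedge with `C` vanishes (this is `⋄₃₁ = 0` on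
`A ⊗ B ⊗ C`). The surviving `T'` are exactly the slices `T` of `B`, with the same shuffle
sign, and the resulting double sum over `(S, T)` is the right side.
-/

open ExteriorAlgebra

theorem Finset.sort_union_of_forall_lt {α : Type*} [LinearOrder α] {A B : Finset α}
    (h : ∀ x ∈ A, ∀ y ∈ B, x < y) : (A ∪ B).sort = A.sort ++ B.sort := by
  classical
  have hlt : (A.sort ++ B.sort).Pairwise (· < ·) :=
    List.pairwise_append.2 ⟨(sortedLT_sort A).pairwise, (sortedLT_sort B).pairwise,
      fun x hx y hy => h x ((mem_sort _).1 hx) y ((mem_sort _).1 hy)⟩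
  rw [← (List.toFinset_sort _ hlt.nodup).2 (hlt.imp le_of_lt), List.toFinset_append,
    sort_toFinset, sort_toFinset]

namespace Fin

variable {s b : ℕ}

theorem castAdd_lt_natAdd (i : Fin s) (j : Fin b) : castAdd b i < natAdd s j := by
  simp only [lt_def, val_castAdd, val_natAdd]
  omega

theorem compl_map_natAddEmb (T : Finset (Fin b)) :
    (T.map (natAddEmb s))ᶜ = Finset.univ.map (castAddEmb b) ∪ Tᶜ.map (natAddEmb s) := by
  ext i
  refine addCases (fun j => ?_) (fun j => ?_) i <;>
    simp [(castAdd_lt_natAdd _ _).ne, (castAdd_lt_natAdd _ _).ne']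

theorem filter_compl_map_natAddEmb (T : Finset (Fin b)) (i : Fin b) :
    (T.map (natAddEmb s))ᶜ.filter (natAdd s i < ·) =
      (Tᶜ.filter (i < ·)).map (natAddEmb s) := by
  ext j
  refine addCases (fun j => ?_) (fun j => ?_) j <;>
    simp [(castAdd_lt_natAdd _ _).ne', (castAdd_lt_natAdd _ _).not_gt]

theorem map_natAddEmb_preimage {T : Finset (Fin (s + b))} (h : ∀ j, castAdd b j ∉ T) :
    (T.preimage (natAdd s) (natAddEmb s).injective.injOn).map (natAddEmb s) = T := by
  ext i
  refine addCases (fun j => ?_) (fun j => ?_) i <;> simp [h, (castAdd_lt_natAdd _ _).ne']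
  exact Finset.mem_preimage

end Fin

theorem shuffleSign_map_natAddEmb {s b : ℕ} (T : Finset (Fin b)) :
    shuffleSign (T.map (Fin.natAddEmb s)) = shuffleSign T := by
  unfold shuffleSign
  rw [Finset.sum_map]
  simp only [Fin.natAddEmb_apply, Fin.filter_compl_map_natAddEmb, Finset.card_map]

section Wedge

variable {K V : Type*} [CommRing K] [AddCommGroup V] [Module K V]

theorem wedgeOn_map_of_strictMono {m n : ℕ} (v : Fin n → V) (f : Fin m ↪ Fin n)
    (hf : StrictMono f) (T : Finset (Fin m)) :
    wedgeOn K v (T.map f) = wedgeOn K (v ∘ f) T := by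
  unfold wedgeOn
  rw [← (hf.strictMonoOn _).map_finsetSort, List.map_map]
  rfl

theorem wedgeOn_eq_ιMulti {n k : ℕ} (v : Fin n → V) (T : Finset (Fin n)) (hT : T.card = k) :
    wedgeOn K v T = ιMulti K k (v ∘ T.orderEmbOfFin hT) := by
  unfold wedgeOn
  rw [← T.listMap_orderEmbOfFin_finRange hT, List.map_map, ιMulti_apply, List.ofFn_eq_map]
  rfl

theorem wedgeOn_univ {n : ℕ} (v : Fin n → V) : wedgeOn K v Finset.univ = ιMulti K n v := by
  unfold wedgeOn
  rw [Fin.sort_univ, ιMulti_apply, List.ofFn_eq_map]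

theorem wedgeOn_union_of_forall_lt {n : ℕ} (v : Fin n → V) {A B : Finset (Fin n)}
    (h : ∀ x ∈ A, ∀ y ∈ B, x < y) :
    wedgeOn K v (A ∪ B) = wedgeOn K v A * wedgeOn K v B := by
  unfold wedgeOn
  rw [Finset.sort_union_of_forall_lt h, List.map_append, List.prod_append]

theorem wedgeOn_append_map_natAddEmb {s b : ℕ} (p : Fin s → V) (w : Fin b → V)
    (T : Finset (Fin b)) :
    wedgeOn K (Fin.append p w) (T.map (Fin.natAddEmb s)) = wedgeOn K w T := by
  rw [wedgeOn_map_of_strictMono _ _ (Fin.strictMono_natAdd s)]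
  congr 1
  exact funext (Fin.append_right p w)

theorem wedgeOn_append_compl_map_natAddEmb {s b : ℕ} (p : Fin s → V) (w : Fin b → V)
    (T : Finset (Fin b)) :
    wedgeOn K (Fin.append p w) (T.map (Fin.natAddEmb s))ᶜ =
      ιMulti K s p * wedgeOn K w Tᶜ := by
  rw [Fin.compl_map_natAddEmb, wedgeOn_union_of_forall_lt, wedgeOn_append_map_natAddEmb,
    wedgeOn_map_of_strictMono _ _ (Fin.strictMono_castAdd b), wedgeOn_univ]
  · congr 2
    exact funext (Fin.append_left p w)
  · simp only [Finset.mem_map, Finset.mem_univ, true_and]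
    rintro _ ⟨i, rfl⟩ _ ⟨j, -, rfl⟩
    exact Fin.castAdd_lt_natAdd i j

theorem ιMulti_append_eq_zero_of_mem_span {m n : ℕ} (q : Fin m → V) (x : Fin n → V)
    (j : Fin m) (hj : q j ∈ Submodule.span K (Set.range x)) :
    ιMulti K (m + n) (Fin.append q x) = 0 := by
  classical
  suffices ∀ y ∈ Submodule.span K (Set.range x),
      ιMulti K (m + n) (Function.update (Fin.append q x) (Fin.castAdd n j) y) = 0 by
    rw [← Fin.append_left q x j] at hj
    rw [← this _ hj, Function.update_eq_self]
  intro y hy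
  induction hy using Submodule.span_induction with
  | mem y hy =>
    obtain ⟨i, rfl⟩ := hy
    exact (ιMulti K _).map_eq_zero_of_eq _ (i := Fin.castAdd n j) (j := Fin.natAdd m i)
      (by simp [(Fin.castAdd_lt_natAdd j i).ne']) (Fin.castAdd_lt_natAdd j i).ne
  | zero => exact (ιMulti K _).map_update_zero _ _
  | add y z _ _ hy hz => rw [AlternatingMap.map_update_add, hy, hz, add_zero]
  | smul r y _ hy => rw [AlternatingMap.map_update_smul, hy, smul_zero]

end Wedge

section GeometricProduct

variable {K V : Type*} [CommRing K] [AddCommGroup V] [Module K V]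

theorem tmul_geom21 (X : ExteriorAlgebra K V) (t : ℕ) {n : ℕ} (v : Fin n → V)
    (Z : ExteriorAlgebra K V) :
    X ⊗ₜ[K] geom21 K t v Z = ∑ T ∈ Finset.powersetCard t Finset.univ,
      shuffleSign T • (X ⊗ₜ[K] (wedgeOn K v Tᶜ ⊗ₜ[K] (wedgeOn K v T * Z))) := by
  simp only [geom21, tmul_sum, tmul_smul]

theorem geom21_append_ιMulti_of_mem_span (t : ℕ) {s b c : ℕ} (p : Fin s → V)
    (w : Fin b → V) (x : Fin c → V) (hp : ∀ j, p j ∈ Submodule.span K (Set.range x)) :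
    geom21 K t (Fin.append p w) (ιMulti K c x) = ∑ T ∈ Finset.powersetCard t Finset.univ,
      shuffleSign T •
        ((ιMulti K s p * wedgeOn K w Tᶜ) ⊗ₜ[K] (wedgeOn K w T * ιMulti K c x)) := by
  symm
  refine Finset.sum_of_injOn (·.map (Fin.natAddEmb s)) (Finset.map_injective _).injOn
    (fun T hT => by simpa using hT) (fun T' hT' hT'_not => ?_) (fun T _ => ?_)
  · rw [Finset.mem_powersetCard_univ] at hT'
    obtain ⟨j, hj⟩ : ∃ j, Fin.castAdd b j ∈ T' := by
      by_contra! h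
      refine hT'_not ⟨_, ?_, Fin.map_natAddEmb_preimage h⟩
      rw [Finset.mem_coe, Finset.mem_powersetCard_univ, ← Finset.card_map (Fin.natAddEmb s),
        Fin.map_natAddEmb_preimage h, hT']
    obtain ⟨i, hi⟩ : Fin.castAdd b j ∈ Set.range (T'.orderEmbOfFin hT') := by
      rwa [Finset.range_orderEmbOfFin]
    rw [wedgeOn_eq_ιMulti _ T' hT', ιMulti_mul_ιMulti,
      ιMulti_append_eq_zero_of_mem_span _ x i (by simpa [hi] using hp j), tmul_zero, smul_zero]
  · rw [shuffleSign_map_natAddEmb, wedgeOn_append_map_natAddEmb,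
      wedgeOn_append_compl_map_natAddEmb]

end GeometricProduct

theorem stmt18_general {K V : Type*} [Field K] [AddCommGroup V] [Module K V]
    (s t : ℕ)
    (D21 D32 : ExteriorAlgebra K V ⊗[K] (ExteriorAlgebra K V ⊗[K] ExteriorAlgebra K V) →ₗ[K]
      ExteriorAlgebra K V ⊗[K] (ExteriorAlgebra K V ⊗[K] ExteriorAlgebra K V))
    (hD21 : ∀ (c : ℕ) (v : Fin c → V) (Y Z : ExteriorAlgebra K V),
      D21 (ExteriorAlgebra.ιMulti K c v ⊗ₜ[K] (Y ⊗ₜ[K] Z)) =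
        ∑ S ∈ Finset.powersetCard s Finset.univ,
          shuffleSign S • (wedgeOn K v Sᶜ ⊗ₜ[K] ((wedgeOn K v S * Y) ⊗ₜ[K] Z)))
    (hD32 : ∀ (X : ExteriorAlgebra K V) (c : ℕ) (v : Fin c → V) (Z : ExteriorAlgebra K V),
      D32 (X ⊗ₜ[K] (ExteriorAlgebra.ιMulti K c v ⊗ₜ[K] Z)) =
        ∑ S ∈ Finset.powersetCard t Finset.univ,
          shuffleSign S • (X ⊗ₜ[K] (wedgeOn K v Sᶜ ⊗ₜ[K] (wedgeOn K v S * Z))))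
    {a b c : ℕ} (u : Fin a → V) (w : Fin b → V) (x : Fin c → V)
    (hdiv : Submodule.span K (Set.range u) ≤ Submodule.span K (Set.range x)) :
    D32 (D21 (ExteriorAlgebra.ιMulti K a u ⊗ₜ[K]
        (ExteriorAlgebra.ιMulti K b w ⊗ₜ[K] ExteriorAlgebra.ιMulti K c x))) =
      D21 (D32 (ExteriorAlgebra.ιMulti K a u ⊗ₜ[K]
        (ExteriorAlgebra.ιMulti K b w ⊗ₜ[K] ExteriorAlgebra.ιMulti K c x))) := by
  have hL : ∀ S ∈ Finset.powersetCard s Finset.univ,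
      D32 (shuffleSign S • (wedgeOn K u Sᶜ ⊗ₜ[K]
        ((wedgeOn K u S * ιMulti K b w) ⊗ₜ[K] ιMulti K c x))) =
      ∑ T ∈ Finset.powersetCard t Finset.univ, shuffleSign S • shuffleSign T •
        (wedgeOn K u Sᶜ ⊗ₜ[K]
          ((wedgeOn K u S * wedgeOn K w Tᶜ) ⊗ₜ[K] (wedgeOn K w T * ιMulti K c x))) := by
    intro S hS
    rw [Finset.mem_powersetCard_univ] at hS
    rw [map_zsmul, wedgeOn_eq_ιMulti u S hS, ιMulti_mul_ιMulti, hD32, ← tmul_geom21,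
      geom21_append_ιMulti_of_mem_span t (u ∘ S.orderEmbOfFin hS) w x
        fun j => hdiv (Submodule.subset_span (Set.mem_range_self _)),
      tmul_sum, Finset.smul_sum]
    simp only [tmul_smul]
  have hR : ∀ T ∈ Finset.powersetCard t Finset.univ,
      D21 (shuffleSign T • (ιMulti K a u ⊗ₜ[K]
        (wedgeOn K w Tᶜ ⊗ₜ[K] (wedgeOn K w T * ιMulti K c x)))) =
      ∑ S ∈ Finset.powersetCard s Finset.univ, shuffleSign T • shuffleSign S •
        (wedgeOn K u Sᶜ ⊗ₜ[K]
          ((wedgeOn K u S * wedgeOn K w Tᶜ) ⊗ₜ[K] (wedgeOn K w T * ιMulti K c x))) := by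
    intro T _
    rw [map_zsmul, hD21, Finset.smul_sum]
  rw [hD21, map_sum, Finset.sum_congr rfl hL, hD32, map_sum, Finset.sum_congr rfl hR,
    Finset.sum_comm]
  exact Finset.sum_congr rfl fun _ _ => Finset.sum_congr rfl fun _ _ => smul_comm _ _ _

/-- modular law for geometric products: for extensors `A, B, C` in `Λ(V)`
with `A` dividing `C` (`Ā ⊆ C̄`), and all `s, t ∈ ℕ`,
`⋄₃₂^{(t)} ⋄₂₁^{(s)} (A ⊗ B ⊗ C) = ⋄₂₁^{(s)} ⋄₃₂^{(t)} (A ⊗ B ⊗ C)`.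
The geometric products `⋄₂₁^{(s)}` and `⋄₃₂^{(t)}` on `Λ(V)^{⊗3}` are given as linear
operators characterized on decomposable arguments by the slice formulas. -/
theorem stmt18 {K V : Type*} [Field K] [AddCommGroup V] [Module K V] [FiniteDimensional K V]
    (s t : ℕ)
    (D21 D32 : ExteriorAlgebra K V ⊗[K] (ExteriorAlgebra K V ⊗[K] ExteriorAlgebra K V) →ₗ[K]
      ExteriorAlgebra K V ⊗[K] (ExteriorAlgebra K V ⊗[K] ExteriorAlgebra K V))
    (hD21 : ∀ (c : ℕ) (v : Fin c → V) (Y Z : ExteriorAlgebra K V),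
      D21 (ExteriorAlgebra.ιMulti K c v ⊗ₜ[K] (Y ⊗ₜ[K] Z)) =
        ∑ S ∈ Finset.powersetCard s Finset.univ,
          shuffleSign S • (wedgeOn K v Sᶜ ⊗ₜ[K] ((wedgeOn K v S * Y) ⊗ₜ[K] Z)))
    (hD32 : ∀ (X : ExteriorAlgebra K V) (c : ℕ) (v : Fin c → V) (Z : ExteriorAlgebra K V),
      D32 (X ⊗ₜ[K] (ExteriorAlgebra.ιMulti K c v ⊗ₜ[K] Z)) =
        ∑ S ∈ Finset.powersetCard t Finset.univ,
          shuffleSign S • (X ⊗ₜ[K] (wedgeOn K v Sᶜ ⊗ₜ[K] (wedgeOn K v S * Z))))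
    {a b c : ℕ} (u : Fin a → V) (w : Fin b → V) (x : Fin c → V)
    (hu : LinearIndependent K u) (hw : LinearIndependent K w) (hx : LinearIndependent K x)
    (hdiv : Submodule.span K (Set.range u) ≤ Submodule.span K (Set.range x)) :
    D32 (D21 (ExteriorAlgebra.ιMulti K a u ⊗ₜ[K]
        (ExteriorAlgebra.ιMulti K b w ⊗ₜ[K] ExteriorAlgebra.ιMulti K c x))) =
      D21 (D32 (ExteriorAlgebra.ιMulti K a u ⊗ₜ[K]
        (ExteriorAlgebra.ιMulti K b w ⊗ₜ[K] ExteriorAlgebra.ιMulti K c x))) :=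
  stmt18_general s t D21 D32 hD21 hD32 u w x hdiv
end

section
/- Let t ∈ V ⊗ W be a tensor with two independent (minimal) representations t = Σᵢ vᵢ ⊗ wᵢ = Σᵢ v'ᵢ ⊗ w'ᵢ (each with p summands, the v's a basis of the left span L_t and the w's a basis of the right span R_t). Let φ, φ' : L_t → R_t be the associated isomorphisms vᵢ ↦ wᵢ and v'ᵢ ↦ w'ᵢ. Then φ = φ' if and only if the transition matrix from (v₁,…,v_p) to (v'₁,…,v'_p) is orthogonal. Moreover, the bilinear form β : L_t × R_t → K defined by β(vᵢ, wⱼ) = δᵢⱼ is independent of the choice of independent representation. -/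
/-! Substituting `v' = v T` into `Σ vᵢ ⊗ wᵢ = Σ v'ⱼ ⊗ w'ⱼ` and contracting with a dual family of the
independent `vᵢ` gives `w = T w'`. Hence `w' = Tᵀ w` holds iff `w' = TᵀT w'`, i.e. iff `TᵀT = 1`; and
coordinates transform as `c = T c'`, `d' = Tᵀ d`, so `⟨c, d⟩ = ⟨T c', d⟩ = ⟨c', Tᵀ d⟩ = ⟨c', d'⟩`. -/

open TensorProduct Matrix

theorem Matrix.sum_smul_sum_smul_eq_sum_mulVec_smul {R M ι κ : Type*} [CommSemiring R]
    [AddCommMonoid M] [Module R M] [Fintype ι] [Fintype κ]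
    (A : Matrix ι κ R) (c : κ → R) (x : ι → M) :
    ∑ j, c j • ∑ i, A i j • x i = ∑ i, (A *ᵥ c) i • x i := by
  simp_rw [Finset.smul_sum, smul_smul]
  rw [Finset.sum_comm]
  simp_rw [mulVec, dotProduct, Finset.sum_smul, mul_comm]

theorem LinearIndependent.eq_mulVec_of_sum_smul_eq {R M ι κ : Type*} [CommSemiring R]
    [AddCommMonoid M] [Module R M] [Fintype ι] [Fintype κ]
    {v : ι → M} {v' : κ → M} (hv : LinearIndependent R v) {T : Matrix ι κ R}
    (hT : ∀ j, v' j = ∑ i, T i j • v i) {c : ι → R} {c' : κ → R}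
    (hc : ∑ i, c i • v i = ∑ j, c' j • v' j) : c = T *ᵥ c' := by
  refine funext <| Fintype.linearIndependent_iffₛ.mp hv _ _ ?_
  rw [hc, ← sum_smul_sum_smul_eq_sum_mulVec_smul]
  simp_rw [hT]

section

variable {K V W ι : Type*} [Field K] [AddCommGroup V] [Module K V] [AddCommGroup W] [Module K W]

theorem LinearIndependent.exists_dual_apply_eq_ite [DecidableEq ι] {v : ι → V}
    (hv : LinearIndependent K v) :
    ∃ f : ι → Module.Dual K V, ∀ i j, f i (v j) = if i = j then 1 else 0 := by
  choose f hf using fun i ↦ LinearMap.exists_extend ((Module.Basis.span hv).coord i)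
  refine ⟨f, fun i j ↦ ?_⟩
  rw [← Module.Basis.coe_span_apply hv j, ← Submodule.subtype_apply, ← LinearMap.comp_apply, hf,
    Module.Basis.coord_apply, Module.Basis.repr_self, Finsupp.single_apply]
  exact if_congr eq_comm rfl rfl

theorem LinearIndependent.eq_zero_of_sum_tmul_eq_zero_s19 [Fintype ι] {v : ι → V}
    (hv : LinearIndependent K v) {n : ι → W} (h : ∑ i, v i ⊗ₜ[K] n i = 0) (i : ι) :
    n i = 0 := by
  classical
  obtain ⟨f, hf⟩ := hv.exists_dual_apply_eq_ite
  have := congrArg (TensorProduct.lid K W ∘ LinearMap.rTensor W (f i)) h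
  simpa [hf, ite_smul] using this

theorem LinearIndependent.eq_sum_smul_of_sum_tmul_eq {κ : Type*} [Fintype ι] [Fintype κ]
    {v : ι → V} {v' : κ → V} {w : ι → W} {w' : κ → W} (hv : LinearIndependent K v)
    (hrep : ∑ i, v i ⊗ₜ[K] w i = ∑ j, v' j ⊗ₜ[K] w' j) {T : Matrix ι κ K}
    (hT : ∀ j, v' j = ∑ i, T i j • v i) (i : ι) :
    w i = ∑ j, T i j • w' j := by
  have hsum : ∑ j, v' j ⊗ₜ[K] w' j = ∑ i, v i ⊗ₜ[K] ∑ j, T i j • w' j := by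
    simp_rw [hT, sum_tmul, tmul_sum, smul_tmul]
    exact Finset.sum_comm
  refine sub_eq_zero.mp
    (hv.eq_zero_of_sum_tmul_eq_zero_s19 (n := fun i ↦ w i - ∑ j, T i j • w' j) ?_ i)
  simp_rw [tmul_sub, Finset.sum_sub_distrib, hrep, hsum, sub_self]

theorem LinearIndependent.forall_eq_sum_smul_iff_transpose_mul_self_eq_one [Fintype ι]
    [DecidableEq ι] {w w' : ι → W} (hw' : LinearIndependent K w') {T : Matrix ι ι K}
    (hw : ∀ i, w i = ∑ j, T i j • w' j) :
    (∀ j, w' j = ∑ i, T i j • w i) ↔ Tᵀ * T = 1 := by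
  have hback (j : ι) : ∑ i, T i j • w i = ∑ k, (Tᵀ * T) k j • w' k := by
    simp_rw [hw]
    exact sum_smul_sum_smul_eq_sum_mulVec_smul Tᵀ (fun i ↦ T i j) w'
  have hone (j : ι) : w' j = ∑ k, (1 : Matrix ι ι K) k j • w' k := by
    simp [one_apply]
  constructor
  · intro h
    ext k j
    have hcoeff : ∑ k, (1 : Matrix ι ι K) k j • w' k = ∑ k, (Tᵀ * T) k j • w' k := by
      rw [← hone, ← hback, ← h]
    exact (Fintype.linearIndependent_iffₛ.mp hw' _ _ hcoeff k).symm
  · intro h j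
    rw [hback, h, ← hone]

end

theorem stmt19_general {K V W : Type*} [Field K] [AddCommGroup V] [Module K V]
    [AddCommGroup W] [Module K W] {p : ℕ}
    (v v' : Fin p → V) (w w' : Fin p → W)
    (hv : LinearIndependent K v)
    (hw' : LinearIndependent K w')
    (hrep : ∑ i, v i ⊗ₜ[K] w i = ∑ i, v' i ⊗ₜ[K] w' i)
    (T : Matrix (Fin p) (Fin p) K)
    (hT : ∀ i, v' i = ∑ h, T h i • v h) :
    ((∀ i, w' i = ∑ h, T h i • w h) ↔ Tᵀ * T = 1) ∧
      (∀ c c' d d' : Fin p → K,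
        (∑ i, c i • v i) = (∑ i, c' i • v' i) →
        (∑ i, d i • w i) = (∑ i, d' i • w' i) →
        (∑ i, c i * d i) = (∑ i, c' i * d' i)) := by
  have hw := hv.eq_sum_smul_of_sum_tmul_eq hrep hT
  refine ⟨hw'.forall_eq_sum_smul_iff_transpose_mul_self_eq_one hw, fun c c' d d' hc hd ↦ ?_⟩
  rw [hv.eq_mulVec_of_sum_smul_eq hT hc, hw'.eq_mulVec_of_sum_smul_eq (T := Tᵀ) hw hd.symm]
  show (T *ᵥ c') ⬝ᵥ d = c' ⬝ᵥ (Tᵀ *ᵥ d)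
  rw [dotProduct_mulVec, vecMul_transpose]

/-- let `t = Σ vᵢ ⊗ wᵢ = Σ v'ᵢ ⊗ w'ᵢ` be two independent (minimal)
representations of a tensor `t ∈ V ⊗ W` with `p` summands, and let `T` be the transition
matrix, `v'ᵢ = Σₕ Tₕᵢ vₕ`. Then the associated isomorphisms `φ : vᵢ ↦ wᵢ` and
`φ' : v'ᵢ ↦ w'ᵢ` of the left span onto the right span coincide — equivalently
`w'ᵢ = Σₕ Tₕᵢ wₕ` for all `i` — if and only if `T` is orthogonal. Moreover the bilinear
form `β(vᵢ, wⱼ) = δᵢⱼ` on (left span) × (right span) is independent of the chosen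
independent representation. -/
theorem stmt19 {K V W : Type*} [Field K] [AddCommGroup V] [Module K V]
    [AddCommGroup W] [Module K W] {p : ℕ}
    (v v' : Fin p → V) (w w' : Fin p → W)
    (hv : LinearIndependent K v) (hw : LinearIndependent K w)
    (hv' : LinearIndependent K v') (hw' : LinearIndependent K w')
    (hrep : ∑ i, v i ⊗ₜ[K] w i = ∑ i, v' i ⊗ₜ[K] w' i)
    (T : Matrix (Fin p) (Fin p) K)
    (hT : ∀ i, v' i = ∑ h, T h i • v h) :
    ((∀ i, w' i = ∑ h, T h i • w h) ↔ Tᵀ * T = 1) ∧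
      (∀ c c' d d' : Fin p → K,
        (∑ i, c i • v i) = (∑ i, c' i • v' i) →
        (∑ i, d i • w i) = (∑ i, d' i • w' i) →
        (∑ i, c i * d i) = (∑ i, c' i * d' i)) :=
  stmt19_general v v' w w' hv hw' hrep T hT
end
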